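/- Let (X,d) be a proper Polish metric space, p ≥ 1, and let G be a topological group acting on X by isometries such that the action is continuous and proper. Suppose the p-th Wasserstein space over X is geodesic, i.e. any two measures in P_p(X) with W_p(μ,ν) ≠ 0 are joined by a constant-speed W_p-geodesic. Then the shape space is geodesic: for all μ, ν ∈ P_p(X) with D_p(μ,ν) ≠ 0 there exists a curve (μ_t)_{t ∈ [0,1]} in P_p(X) with μ_0 = μ, μ_1 equivalent to ν (∃ g ∈ G, g_#μ_1 = ν), and D_p(μ_s, μ_t) = |s − t| · D_p(μ, ν) for all s, t ∈ [0,1]. -/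

import Mathlib

open MeasureTheory ENNReal Set

noncomputable section

/-- The set of admissible couplings of two measures. -/
def Adm {X : Type*} [MeasurableSpace X] (μ ν : Measure X) : Set (Measure (X × X)) :=
  {π | IsProbabilityMeasure π ∧ π.map Prod.fst = μ ∧ π.map Prod.snd = ν}

/-- The `p`-th Wasserstein distance. -/
def Wp {X : Type*} [MeasurableSpace X] [PseudoEMetricSpace X] (p : ℝ) (μ ν : Measure X) :
    ℝ≥0∞ :=
  (⨅ π ∈ Adm μ ν, ∫⁻ z : X × X, edist z.1 z.2 ^ p ∂π) ^ (1 / p)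

/-- Finite `p`-th moment. -/
def HasFinitePMoment {X : Type*} [MeasurableSpace X] [PseudoEMetricSpace X] (p : ℝ)
    (μ : Measure X) : Prop :=
  ∃ x₀ : X, ∫⁻ x, edist x x₀ ^ p ∂μ ≠ ⊤

/-- Shape distance `D_p(μ,ν) := inf_{g ∈ G} W_p(g_#μ, ν)` for a group action. -/
def DpAct {X : Type*} (G : Type*) [Group G] [MulAction G X] [MeasurableSpace X]
    [MetricSpace X] (p : ℝ) (μ ν : Measure X) : ℝ≥0∞ :=
  ⨅ g : G, Wp p (μ.map (fun x : X => g • x)) ν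

open ProbabilityTheory Filter Topology Metric

/-!
The infimum defining `D_p(μ, ν)` is attained. Indeed `g ↦ W_p(g_#μ, ν)` is continuous, because
the action is uniformly continuous on compact sets and `μ` has a finite `p`-th moment, and it is
coercive: the triangle inequality through Dirac masses gives
`d(g x₀, x₀) ≤ W_p(μ, δ_{x₀}) + W_p(g_#μ, ν) + W_p(ν, δ_{x₀})`, and properness of the action turns
bounded orbits of `x₀` into compact subsets of `G`. If `g₀` is a minimiser, a `W_p`-geodesic from
`μ` to `g₀⁻¹_#ν` is a `D_p`-geodesic: `D_p ≤ W_p` gives one inequality, and the triangle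
inequality for `D_p` (from the one for `W_p`, proved by gluing couplings, and the `G`-invariance
of `W_p`) forces the other.
-/

lemma curve_dist_eq_of_le_of_endpoints {α : Type*} (d : α → α → ℝ≥0∞)
    (hcomm : ∀ a b, d a b = d b a) (htri : ∀ a b c, d a c ≤ d a b + d b c)
    (γ : ℝ → α) {L : ℝ≥0∞} (hL : L ≠ ⊤)
    (hle : ∀ s ∈ Icc (0:ℝ) 1, ∀ t ∈ Icc (0:ℝ) 1, d (γ s) (γ t) ≤ ENNReal.ofReal |s - t| * L)
    (hends : L ≤ d (γ 0) (γ 1)) :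
    ∀ s ∈ Icc (0:ℝ) 1, ∀ t ∈ Icc (0:ℝ) 1, d (γ s) (γ t) = ENNReal.ofReal |s - t| * L := by
  suffices h : ∀ s ∈ Icc (0:ℝ) 1, ∀ t ∈ Icc (0:ℝ) 1, s ≤ t →
      ENNReal.ofReal (t - s) * L ≤ d (γ s) (γ t) by
    intro s hs t ht
    refine le_antisymm (hle s hs t ht) ?_
    rcases le_total s t with hst | hts
    · rw [abs_sub_comm, abs_of_nonneg (sub_nonneg.2 hst)]; exact h s hs t ht hst
    · rw [abs_of_nonneg (sub_nonneg.2 hts), hcomm]; exact h t ht s hs hts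
  intro s hs t ht hst
  have h0 : (0:ℝ) ∈ Icc (0:ℝ) 1 := left_mem_Icc.2 zero_le_one
  have h1 : (1:ℝ) ∈ Icc (0:ℝ) 1 := right_mem_Icc.2 zero_le_one
  have hfin : ENNReal.ofReal s * L + ENNReal.ofReal (1 - t) * L ≠ ⊤ := by finiteness
  refine (ENNReal.add_le_add_iff_right hfin).1 ?_
  calc ENNReal.ofReal (t - s) * L + (ENNReal.ofReal s * L + ENNReal.ofReal (1 - t) * L)
      = L := by
        rw [← add_assoc, ← add_mul, ← add_mul, ← ENNReal.ofReal_add (by linarith) hs.1,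
          ← ENNReal.ofReal_add (by linarith [ht.1]) (by linarith [ht.2])]
        norm_num
    _ ≤ d (γ 0) (γ s) + d (γ s) (γ t) + d (γ t) (γ 1) :=
        hends.trans ((htri _ (γ t) _).trans (by gcongr; exact htri _ (γ s) _))
    _ ≤ ENNReal.ofReal s * L + d (γ s) (γ t) + ENNReal.ofReal (1 - t) * L := by
        gcongr
        · simpa [abs_of_nonneg hs.1] using hle 0 h0 s hs
        · simpa [abs_of_nonpos (sub_nonpos.2 ht.2)] using hle t ht 1 h1
    _ = d (γ s) (γ t) + (ENNReal.ofReal s * L + ENNReal.ofReal (1 - t) * L) := by ring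

section Couplings

variable {X : Type*} [MeasurableSpace X] {μ ν : Measure X}

lemma prod_mem_Adm [IsProbabilityMeasure μ] [IsProbabilityMeasure ν] : μ.prod ν ∈ Adm μ ν :=
  ⟨inferInstance, by simp, by simp⟩

lemma map_prodMap_mem_Adm {π : Measure (X × X)} (hπ : π ∈ Adm μ ν) {f g : X → X}
    (hf : Measurable f) (hg : Measurable g) :
    π.map (Prod.map f g) ∈ Adm (μ.map f) (ν.map g) := by
  obtain ⟨hπP, hπ₁, hπ₂⟩ := hπ
  refine ⟨Measure.isProbabilityMeasure_map (hf.prodMap hg).aemeasurable, ?_, ?_⟩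
  · rw [Measure.map_map measurable_fst (hf.prodMap hg), ← hπ₁, Measure.map_map hf measurable_fst]
    rfl
  · rw [Measure.map_map measurable_snd (hf.prodMap hg), ← hπ₂, Measure.map_map hg measurable_snd]
    rfl

variable [PseudoEMetricSpace X] {p : ℝ}

lemma Wp_eq_iInf (hp : 0 < p) (μ ν : Measure X) :
    Wp p μ ν = ⨅ π ∈ Adm μ ν, (∫⁻ z : X × X, edist z.1 z.2 ^ p ∂π) ^ (1 / p) :=
  (ENNReal.orderIsoRpow (1 / p) (by positivity)).map_iInf₂ _

lemma Wp_le_of_mem_Adm (hp : 0 ≤ p) {π : Measure (X × X)} (hπ : π ∈ Adm μ ν) :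
    Wp p μ ν ≤ (∫⁻ z : X × X, edist z.1 z.2 ^ p ∂π) ^ (1 / p) :=
  ENNReal.rpow_le_rpow (iInf₂_le π hπ) (by positivity)

lemma Wp_map_map_le (hp : 0 ≤ p) [IsProbabilityMeasure μ] {f g : X → X} (hf : Measurable f)
    (hg : Measurable g) :
    Wp p (μ.map f) (μ.map g) ≤ (∫⁻ x, edist (f x) (g x) ^ p ∂μ) ^ (1 / p) := by
  have hπ : μ.map (fun x => (f x, g x)) ∈ Adm (μ.map f) (μ.map g) :=
    ⟨Measure.isProbabilityMeasure_map (hf.prodMk hg).aemeasurable,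
      by rw [Measure.map_map measurable_fst (hf.prodMk hg)]; rfl,
      by rw [Measure.map_map measurable_snd (hf.prodMk hg)]; rfl⟩
  exact (Wp_le_of_mem_Adm hp hπ).trans (ENNReal.rpow_le_rpow (lintegral_map_le _ _) (by positivity))

lemma Wp_comm_le (hp : 0 < p) (μ ν : Measure X) : Wp p ν μ ≤ Wp p μ ν := by
  rw [Wp_eq_iInf hp μ ν]
  refine le_iInf₂ fun π ⟨hπP, hπ₁, hπ₂⟩ => ?_
  have hswap : π.map Prod.swap ∈ Adm ν μ :=
    ⟨Measure.isProbabilityMeasure_map measurable_swap.aemeasurable,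
      by rwa [Measure.map_map measurable_fst measurable_swap],
      by rwa [Measure.map_map measurable_snd measurable_swap]⟩
  refine (Wp_le_of_mem_Adm hp.le hswap).trans_eq ?_
  rw [show (Prod.swap : X × X → X × X) = MeasurableEquiv.prodComm from rfl, lintegral_map_equiv]
  exact congrArg (· ^ (1 / p)) (lintegral_congr fun z => by rw [edist_comm]; rfl)

lemma Wp_comm (hp : 0 < p) (μ ν : Measure X) : Wp p μ ν = Wp p ν μ :=
  le_antisymm (Wp_comm_le hp ν μ) (Wp_comm_le hp μ ν)

lemma Wp_map_le (hp : 0 < p) {f : X → X} (hf : Measurable f)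
    (hf_edist : ∀ x y, edist (f x) (f y) = edist x y) :
    Wp p (μ.map f) (ν.map f) ≤ Wp p μ ν := by
  rw [Wp_eq_iInf hp μ ν]
  refine le_iInf₂ fun π hπ => (Wp_le_of_mem_Adm hp.le (map_prodMap_mem_Adm hπ hf hf)).trans ?_
  refine ENNReal.rpow_le_rpow ((lintegral_map_le _ _).trans_eq ?_) (by positivity)
  simp [hf_edist]

end Couplings

section Gluing

variable {X Y Z : Type*} [MeasurableSpace X] [MeasurableSpace Y] [MeasurableSpace Z]
  [StandardBorelSpace X] [Nonempty X] [StandardBorelSpace Z] [Nonempty Z]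

/-- The measure of the gluing lemma: when `π₁.snd = π₂.fst`, its marginals on `X × Y` and `Y × Z`
are `π₁` and `π₂`. -/
def gluing (π₁ : Measure (X × Y)) (π₂ : Measure (Y × Z)) [IsFiniteMeasure π₁]
    [IsFiniteMeasure π₂] : Measure (Y × X × Z) :=
  π₂.fst ⊗ₘ ((π₁.map Prod.swap).condKernel ×ₖ π₂.condKernel)

variable {π₁ : Measure (X × Y)} {π₂ : Measure (Y × Z)} [IsFiniteMeasure π₁]

instance [IsProbabilityMeasure π₂] : IsProbabilityMeasure (gluing π₁ π₂) := by
  unfold gluing; infer_instance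

variable [IsFiniteMeasure π₂]

lemma gluing_map_left (h : π₁.snd = π₂.fst) :
    (gluing π₁ π₂).map (fun q => (q.2.1, q.1)) = π₁ := by
  have hfst : (π₁.map Prod.swap).fst = π₂.fst := by
    rw [Measure.fst, Measure.map_map measurable_fst measurable_swap]
    exact h
  have hmarg : (gluing π₁ π₂).map (Prod.map id Prod.fst) = π₁.map Prod.swap := by
    rw [gluing, ← Measure.compProd_map measurable_fst, ← Kernel.fst_eq, Kernel.fst_prod, ← hfst,
      Measure.disintegrate]
  rw [show (fun q : Y × X × Z => (q.2.1, q.1)) = Prod.swap ∘ Prod.map id Prod.fst from rfl,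
    ← Measure.map_map measurable_swap (measurable_id.prodMap measurable_fst), hmarg,
    Measure.map_map measurable_swap measurable_swap, Prod.swap_swap_eq, Measure.map_id]

lemma gluing_map_right :
    (gluing π₁ π₂).map (fun q => (q.1, q.2.2)) = π₂ := by
  rw [show (fun q : Y × X × Z => (q.1, q.2.2)) = Prod.map id Prod.snd from rfl, gluing,
    ← Measure.compProd_map measurable_snd, ← Kernel.snd_eq, Kernel.snd_prod, Measure.disintegrate]

end Gluing

section Wasserstein

variable {X : Type*} [MetricSpace X] [MeasurableSpace X] [BorelSpace X]
  [SecondCountableTopology X] {p : ℝ} {μ ν ρ : Measure X}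

lemma lintegral_edist_pow_eq_of_mem_Adm_dirac {π : Measure (X × X)} {y : X}
    (hπ : π ∈ Adm μ (Measure.dirac y)) :
    ∫⁻ z : X × X, edist z.1 z.2 ^ p ∂π = ∫⁻ x, edist x y ^ p ∂μ := by
  obtain ⟨-, hπ₁, hπ₂⟩ := hπ
  have hsnd : ∀ᵐ z ∂π, z.2 = y := ae_of_ae_map measurable_snd.aemeasurable <| by
    rw [hπ₂]; exact (ae_dirac_iff (measurableSet_singleton y)).2 rfl
  rw [lintegral_congr_ae (hsnd.mono fun z hz => by rw [hz]), ← hπ₁,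
    lintegral_map (by fun_prop) measurable_fst]

lemma Wp_dirac_right [IsProbabilityMeasure μ] (y : X) :
    Wp p μ (Measure.dirac y) = (∫⁻ x, edist x y ^ p ∂μ) ^ (1 / p) := by
  refine congrArg (· ^ (1 / p)) ?_
  calc ⨅ π ∈ Adm μ (Measure.dirac y), ∫⁻ z : X × X, edist z.1 z.2 ^ p ∂π
      = ⨅ π ∈ Adm μ (Measure.dirac y), ∫⁻ x, edist x y ^ p ∂μ :=
        iInf_congr fun _ => iInf_congr fun hπ => lintegral_edist_pow_eq_of_mem_Adm_dirac hπ
    _ = ∫⁻ x, edist x y ^ p ∂μ := biInf_const ⟨_, prod_mem_Adm⟩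

lemma Wp_dirac_dirac (hp : 0 < p) (x y : X) :
    Wp p (Measure.dirac x) (Measure.dirac y) = edist x y := by
  rw [Wp_dirac_right, lintegral_dirac, ← ENNReal.rpow_mul, mul_one_div_cancel hp.ne',
    ENNReal.rpow_one]

lemma Wp_le_add_of_mem_Adm [CompleteSpace X] (hp : 1 ≤ p) {π₁ π₂ : Measure (X × X)}
    (h₁ : π₁ ∈ Adm μ ν) (h₂ : π₂ ∈ Adm ν ρ) :
    Wp p μ ρ ≤ (∫⁻ z : X × X, edist z.1 z.2 ^ p ∂π₁) ^ (1 / p)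
      + (∫⁻ z : X × X, edist z.1 z.2 ^ p ∂π₂) ^ (1 / p) := by
  obtain ⟨hP₁, hμ, hν⟩ := h₁
  obtain ⟨hP₂, hν', hρ⟩ := h₂
  have : Nonempty X := (nonempty_of_isProbabilityMeasure π₁).map Prod.fst
  have hmarg : π₁.snd = π₂.fst := hν.trans hν'.symm
  set m := gluing π₁ π₂
  have hτ : m.map (fun q => q.2) ∈ Adm μ ρ := by
    refine ⟨Measure.isProbabilityMeasure_map (by fun_prop), ?_, ?_⟩
    · rw [← hμ, ← gluing_map_left hmarg, Measure.map_map measurable_fst (by fun_prop),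
        Measure.map_map measurable_fst (by fun_prop)]
      rfl
    · rw [← hρ, ← gluing_map_right (π₁ := π₁) (π₂ := π₂),
        Measure.map_map measurable_snd (by fun_prop), Measure.map_map measurable_snd (by fun_prop)]
      rfl
  have hcost₁ : ∫⁻ q, edist q.2.1 q.1 ^ p ∂m = ∫⁻ z : X × X, edist z.1 z.2 ^ p ∂π₁ := by
    conv_rhs => rw [← gluing_map_left hmarg]
    rw [lintegral_map (by fun_prop) (by fun_prop)]
  have hcost₂ : ∫⁻ q, edist q.1 q.2.2 ^ p ∂m = ∫⁻ z : X × X, edist z.1 z.2 ^ p ∂π₂ := by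
    conv_rhs => rw [← gluing_map_right (π₁ := π₁) (π₂ := π₂)]
    rw [lintegral_map (by fun_prop) (by fun_prop)]
  calc Wp p μ ρ ≤ (∫⁻ q, edist q.2.1 q.2.2 ^ p ∂m) ^ (1 / p) := by
        refine (Wp_le_of_mem_Adm (by positivity) hτ).trans_eq ?_
        rw [lintegral_map (by fun_prop) (by fun_prop)]
    _ ≤ (∫⁻ q, ((fun q : X × X × X => edist q.2.1 q.1)
          + fun q : X × X × X => edist q.1 q.2.2) q ^ p ∂m) ^ (1 / p) := by
        gcongr with q
        exact edist_triangle _ _ _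
    _ ≤ _ := ENNReal.lintegral_Lp_add_le (by fun_prop) (by fun_prop) hp
    _ = _ := by rw [hcost₁, hcost₂]

lemma Wp_triangle [CompleteSpace X] (hp : 1 ≤ p) (μ ν ρ : Measure X) :
    Wp p μ ρ ≤ Wp p μ ν + Wp p ν ρ := by
  rw [Wp_eq_iInf (by positivity) μ ν, Wp_eq_iInf (by positivity) ν ρ]
  simp only [ENNReal.iInf_add, ENNReal.add_iInf]
  exact le_iInf₂ fun π₂ h₂ => le_iInf₂ fun π₁ h₁ => Wp_le_add_of_mem_Adm hp h₁ h₂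

end Wasserstein

section Moments

variable {X : Type*} [MetricSpace X] [MeasurableSpace X] [BorelSpace X]
  [SecondCountableTopology X] [CompleteSpace X] {p : ℝ} {μ ν : Measure X}

lemma HasFinitePMoment.Wp_dirac_ne_top (hp : 1 ≤ p) [IsProbabilityMeasure μ]
    (hμ : HasFinitePMoment p μ) (y : X) : Wp p μ (Measure.dirac y) ≠ ⊤ := by
  obtain ⟨x₀, hx₀⟩ := hμ
  have h₀ : Wp p μ (Measure.dirac x₀) ≠ ⊤ := by
    rw [Wp_dirac_right]
    exact ENNReal.rpow_ne_top_of_nonneg (by positivity) hx₀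
  refine ne_top_of_le_ne_top ?_ (Wp_triangle hp μ (Measure.dirac x₀) (Measure.dirac y))
  rw [Wp_dirac_dirac (by positivity)]
  exact ENNReal.add_ne_top.2 ⟨h₀, edist_ne_top _ _⟩

lemma HasFinitePMoment.Wp_ne_top (hp : 1 ≤ p) [IsProbabilityMeasure μ] [IsProbabilityMeasure ν]
    (hμ : HasFinitePMoment p μ) (hν : HasFinitePMoment p ν) : Wp p μ ν ≠ ⊤ := by
  obtain ⟨x₀⟩ := nonempty_of_isProbabilityMeasure μ
  refine ne_top_of_le_ne_top ?_ (Wp_triangle hp μ (Measure.dirac x₀) ν)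
  rw [Wp_comm (by positivity) _ ν]
  exact ENNReal.add_ne_top.2 ⟨hμ.Wp_dirac_ne_top hp x₀, hν.Wp_dirac_ne_top hp x₀⟩

end Moments

lemma HasFinitePMoment.map {X : Type*} [MetricSpace X] [MeasurableSpace X] [BorelSpace X]
    {p : ℝ} {μ : Measure X} (hμ : HasFinitePMoment p μ) {f : X → X} (hf : Isometry f) :
    HasFinitePMoment p (μ.map f) := by
  obtain ⟨x₀, hx₀⟩ := hμ
  refine ⟨f x₀, ?_⟩
  rw [lintegral_map (by fun_prop) hf.continuous.measurable]
  simpa only [hf.edist_eq] using hx₀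

section Action

variable {X : Type*} [MeasurableSpace X] {G : Type*} [Group G] [MulAction G X]

lemma map_one_smul (μ : Measure X) : μ.map ((1 : G) • ·) = μ := by
  simp

lemma map_smul_map_smul [MeasurableConstSMul G X] (μ : Measure X) (g h : G) :
    (μ.map (g • ·)).map (h • ·) = μ.map ((h * g) • ·) := by
  rw [Measure.map_map (measurable_const_smul h) (measurable_const_smul g)]
  simp [Function.comp_def, mul_smul]

variable [MetricSpace X] {p : ℝ}

lemma DpAct_le_Wp (μ ν : Measure X) : DpAct G p μ ν ≤ Wp p μ ν :=
  (iInf_le _ 1).trans_eq (by rw [map_one_smul])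

variable [MeasurableConstSMul G X]

lemma Wp_map_smul_map_smul (hp : 0 < p) (hiso : ∀ g : G, Isometry (fun x : X => g • x))
    (μ ν : Measure X) (g : G) :
    Wp p (μ.map (g • ·)) (ν.map (g • ·)) = Wp p μ ν := by
  refine le_antisymm (Wp_map_le hp (measurable_const_smul g) (hiso g).edist_eq) ?_
  have h := Wp_map_le (μ := μ.map (g • ·)) (ν := ν.map (g • ·)) hp
    (measurable_const_smul g⁻¹) (hiso g⁻¹).edist_eq
  rwa [map_smul_map_smul, map_smul_map_smul, inv_mul_cancel, map_one_smul, map_one_smul] at h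

lemma Wp_map_smul_left (hp : 0 < p) (hiso : ∀ g : G, Isometry (fun x : X => g • x))
    (μ ν : Measure X) (g : G) :
    Wp p (μ.map (g • ·)) ν = Wp p μ (ν.map (g⁻¹ • ·)) := by
  rw [← Wp_map_smul_map_smul hp hiso _ _ g⁻¹, map_smul_map_smul, inv_mul_cancel, map_one_smul]

lemma DpAct_comm_le (hp : 0 < p) (hiso : ∀ g : G, Isometry (fun x : X => g • x))
    (μ ν : Measure X) : DpAct G p ν μ ≤ DpAct G p μ ν :=
  le_iInf fun g => (iInf_le _ g⁻¹).trans_eq <| by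
    rw [Wp_map_smul_left hp hiso, inv_inv, Wp_comm hp]

lemma DpAct_comm (hp : 0 < p) (hiso : ∀ g : G, Isometry (fun x : X => g • x))
    (μ ν : Measure X) : DpAct G p μ ν = DpAct G p ν μ :=
  le_antisymm (DpAct_comm_le hp hiso ν μ) (DpAct_comm_le hp hiso μ ν)

lemma DpAct_le_map_smul_right (hp : 0 < p) (hiso : ∀ g : G, Isometry (fun x : X => g • x))
    (μ ν : Measure X) (g : G) : DpAct G p μ ν ≤ DpAct G p μ (ν.map (g • ·)) :=
  le_iInf fun h => (iInf_le _ (g⁻¹ * h)).trans_eq <| by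
    rw [Wp_map_smul_left hp hiso, Wp_map_smul_left hp hiso, map_smul_map_smul, mul_inv_rev,
      inv_inv]

lemma DpAct_triangle [BorelSpace X] [SecondCountableTopology X] [CompleteSpace X] (hp : 1 ≤ p)
    (hiso : ∀ g : G, Isometry (fun x : X => g • x)) (μ ν ρ : Measure X) :
    DpAct G p μ ρ ≤ DpAct G p μ ν + DpAct G p ν ρ := by
  simp only [DpAct, ENNReal.iInf_add, ENNReal.add_iInf]
  refine le_iInf₂ fun h g => (iInf_le _ (h * g)).trans ?_
  calc Wp p (μ.map ((h * g) • ·)) ρ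
      ≤ Wp p (μ.map ((h * g) • ·)) (ν.map (h • ·)) + Wp p (ν.map (h • ·)) ρ :=
        Wp_triangle hp _ _ _
    _ = Wp p (μ.map (g • ·)) ν + Wp p (ν.map (h • ·)) ρ := by
        rw [← map_smul_map_smul, Wp_map_smul_map_smul (by positivity) hiso]

lemma edist_smul_le_Wp_map_smul [BorelSpace X] [SecondCountableTopology X] [CompleteSpace X]
    (hp : 1 ≤ p) (hiso : ∀ g : G, Isometry (fun x : X => g • x))
    (μ ν : Measure X) (g : G) (x₀ : X) :
    edist (g • x₀) x₀ ≤
      Wp p μ (Measure.dirac x₀) + Wp p (μ.map (g • ·)) ν + Wp p ν (Measure.dirac x₀) := by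
  have hp' : 0 < p := by positivity
  calc edist (g • x₀) x₀ = Wp p ((Measure.dirac x₀).map (g • ·)) (Measure.dirac x₀) := by
        rw [Measure.map_dirac' (measurable_const_smul g), Wp_dirac_dirac hp']
    _ ≤ Wp p ((Measure.dirac x₀).map (g • ·)) (μ.map (g • ·))
          + Wp p (μ.map (g • ·)) (Measure.dirac x₀) := Wp_triangle hp _ _ _
    _ ≤ Wp p ((Measure.dirac x₀).map (g • ·)) (μ.map (g • ·))
          + (Wp p (μ.map (g • ·)) ν + Wp p ν (Measure.dirac x₀)) := by
        gcongr; exact Wp_triangle hp _ _ _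
    _ = _ := by rw [Wp_map_smul_map_smul hp' hiso, Wp_comm hp' _ μ, add_assoc]

end Action

section Attainment

lemma tendsto_measure_compl_closedBall_nat {X : Type*} [PseudoMetricSpace X] [MeasurableSpace X]
    [OpensMeasurableSpace X] (μ : Measure X) [IsFiniteMeasure μ] (x : X) :
    Tendsto (fun n : ℕ => μ (closedBall x n)ᶜ) atTop (𝓝 0) := by
  have h := tendsto_measure_iInter_atTop (μ := μ) (s := fun n : ℕ => (closedBall x n)ᶜ)
    (fun _ => measurableSet_closedBall.compl.nullMeasurableSet)
    (fun _ _ hmn => compl_subset_compl.2 (closedBall_subset_closedBall (by exact_mod_cast hmn)))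
    ⟨0, measure_ne_top μ _⟩
  rwa [← compl_iUnion, iUnion_closedBall_nat, compl_univ, measure_empty] at h

lemma eventually_forall_edist_smul_lt {X G : Type*} [PseudoEMetricSpace X] [TopologicalSpace G]
    [SMul G X] [ContinuousSMul G X] {K : Set X} (hK : IsCompact K) (g : G) {ε : ℝ≥0∞}
    (hε : 0 < ε) : ∀ᶠ h in 𝓝 g, ∀ x ∈ K, edist (g • x) (h • x) < ε := by
  refine hK.eventually_forall_of_forall_eventually fun x _ => ?_
  have hcont : Continuous fun q : G × X => edist (g • q.2) (q.1 • q.2) := by fun_prop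
  exact hcont.continuousAt.eventually_lt continuousAt_const (by simpa using hε)

lemma edist_smul_smul_le {X G : Type*} [PseudoEMetricSpace X] [SMul G X]
    (hiso : ∀ g : G, Isometry (fun x : X => g • x)) (g h : G) (x y : X) :
    edist (g • x) (h • x) ≤ edist (g • y) (h • y) + 2 * edist x y :=
  calc edist (g • x) (h • x)
        ≤ edist (g • x) (g • y) + edist (g • y) (h • y) + edist (h • y) (h • x) :=
        edist_triangle4 _ _ _ _
    _ = edist (g • y) (h • y) + 2 * edist x y := by
        rw [(hiso g).edist_eq, (hiso h).edist_eq, edist_comm y x]; ring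

variable {X : Type*} [MetricSpace X] [MeasurableSpace X] [BorelSpace X]
  [SecondCountableTopology X] [ProperSpace X]
  {G : Type*} [Group G] [TopologicalSpace G] [MulAction G X] [ContinuousSMul G X]
  {p : ℝ} {μ ν : Measure X}

lemma tendsto_lintegral_edist_smul_pow (hp : 1 ≤ p) (hiso : ∀ g : G, Isometry (fun x : X => g • x))
    [IsProbabilityMeasure μ] (hμ : HasFinitePMoment p μ) (g : G) :
    Tendsto (fun h : G => ∫⁻ x, edist (g • x) (h • x) ^ p ∂μ) (𝓝 g) (𝓝 0) := by
  obtain ⟨x₀, hx₀⟩ := hμ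
  have hF : ∫⁻ x, (2 * edist x x₀ + 1) ^ p ∂μ ≠ ⊤ := by
    refine (lintegral_rpow_add_lt_top_of_lintegral_rpow_lt_top (by fun_prop) ?_ ?_ hp).ne
    · simp_rw [ENNReal.mul_rpow_of_nonneg _ _ (by positivity : (0 : ℝ) ≤ p)]
      rw [lintegral_const_mul _ (by fun_prop)]
      exact ENNReal.mul_lt_top (ENNReal.rpow_lt_top_of_nonneg (by positivity) ENNReal.ofNat_ne_top)
        hx₀.lt_top
    · simp
  -- Uniformly small on a large ball, dominated by `(2 d(x, x₀) + 1) ^ p` outside it.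
  rw [ENNReal.tendsto_nhds_zero]
  intro ε hε
  obtain ⟨n, hn⟩ := (ENNReal.tendsto_nhds_zero.1 (tendsto_setLIntegral_zero hF
    (tendsto_measure_compl_closedBall_nat μ x₀)) (ε / 2) (by simpa using hε.ne')).exists
  have hδ : (0 : ℝ≥0∞) < (ε / 2) ^ (1 / p) :=
    ENNReal.rpow_pos_of_nonneg (ENNReal.half_pos hε.ne') (by positivity)
  filter_upwards [eventually_forall_edist_smul_lt (isCompact_closedBall x₀ n) g hδ,
    eventually_forall_edist_smul_lt (isCompact_closedBall x₀ n) g one_pos] with h hnear hone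
  have hball : ∫⁻ x in closedBall x₀ n, edist (g • x) (h • x) ^ p ∂μ ≤ ε / 2 := by
    refine (setLIntegral_mono' measurableSet_closedBall fun x hx => ?_).trans
      ((setLIntegral_const _ _).trans_le (mul_le_of_le_one_right' prob_le_one))
    calc edist (g • x) (h • x) ^ p ≤ ((ε / 2) ^ (1 / p)) ^ p := by
          gcongr; exact (hnear x hx).le
      _ = ε / 2 := by rw [← ENNReal.rpow_mul, one_div_mul_cancel (by positivity), ENNReal.rpow_one]
  have htail : ∫⁻ x in (closedBall x₀ n)ᶜ, edist (g • x) (h • x) ^ p ∂μ ≤ ε / 2 := by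
    refine (setLIntegral_mono' measurableSet_closedBall.compl fun x _ => ?_).trans hn
    gcongr
    calc edist (g • x) (h • x) ≤ edist (g • x₀) (h • x₀) + 2 * edist x x₀ :=
          edist_smul_smul_le hiso g h x x₀
      _ ≤ 2 * edist x x₀ + 1 := by
          rw [add_comm]; gcongr; exact (hone x₀ (mem_closedBall_self (by positivity))).le
  rw [← lintegral_add_compl _ measurableSet_closedBall]
  exact (add_le_add hball htail).trans_eq (ENNReal.add_halves ε)

lemma tendsto_Wp_map_smul (hp : 1 ≤ p) (hiso : ∀ g : G, Isometry (fun x : X => g • x))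
    [IsProbabilityMeasure μ] (hμ : HasFinitePMoment p μ) (g : G) :
    Tendsto (fun h : G => Wp p (μ.map (g • ·)) (μ.map (h • ·))) (𝓝 g) (𝓝 0) := by
  have hlim := ((ENNReal.continuous_rpow_const (y := 1 / p)).tendsto 0).comp
    (tendsto_lintegral_edist_smul_pow hp hiso hμ g)
  rw [Function.comp_def, ENNReal.zero_rpow_of_pos (by positivity)] at hlim
  exact tendsto_of_tendsto_of_tendsto_of_le_of_le tendsto_const_nhds hlim (fun _ => zero_le)
    fun h => Wp_map_map_le (by positivity) (measurable_const_smul g) (measurable_const_smul h)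

variable [CompleteSpace X]

lemma continuous_Wp_map_smul (hp : 1 ≤ p) (hiso : ∀ g : G, Isometry (fun x : X => g • x))
    [IsProbabilityMeasure μ] [IsProbabilityMeasure ν] (hμ : HasFinitePMoment p μ)
    (hν : HasFinitePMoment p ν) : Continuous fun g : G => Wp p (μ.map (g • ·)) ν := by
  refine continuous_iff_continuousAt.2 fun g => ?_
  have : IsProbabilityMeasure (μ.map (g • ·)) :=
    Measure.isProbabilityMeasure_map (measurable_const_smul g).aemeasurable
  rw [ContinuousAt, ENNReal.tendsto_nhds ((hμ.map (hiso g)).Wp_ne_top hp hν)]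
  intro ε hε
  filter_upwards [ENNReal.tendsto_nhds_zero.1 (tendsto_Wp_map_smul hp hiso hμ g) ε hε] with h hh
  refine ⟨tsub_le_iff_right.2 ?_, ?_⟩
  · calc Wp p (μ.map (g • ·)) ν ≤ Wp p (μ.map (g • ·)) (μ.map (h • ·)) + Wp p (μ.map (h • ·)) ν :=
          Wp_triangle hp _ _ _
      _ ≤ Wp p (μ.map (h • ·)) ν + ε := by rw [add_comm]; gcongr
  · calc Wp p (μ.map (h • ·)) ν ≤ Wp p (μ.map (h • ·)) (μ.map (g • ·)) + Wp p (μ.map (g • ·)) ν :=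
          Wp_triangle hp _ _ _
      _ ≤ Wp p (μ.map (g • ·)) ν + ε := by
          rw [add_comm, Wp_comm (by positivity) (μ.map (h • ·))]; gcongr

lemma eventually_cocompact_lt_Wp_map_smul [ProperSMul G X] (hp : 1 ≤ p)
    (hiso : ∀ g : G, Isometry (fun x : X => g • x)) [IsProbabilityMeasure μ]
    [IsProbabilityMeasure ν] (hμ : HasFinitePMoment p μ) (hν : HasFinitePMoment p ν)
    {c : ℝ≥0∞} (hc : c ≠ ⊤) : ∀ᶠ g in cocompact G, c < Wp p (μ.map (g • ·)) ν := by
  obtain ⟨x₀⟩ := nonempty_of_isProbabilityMeasure μ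
  set R := Wp p μ (Measure.dirac x₀) + c + Wp p ν (Measure.dirac x₀) with hR_def
  have hR : R ≠ ⊤ := by
    simp [R, hc, hμ.Wp_dirac_ne_top hp, hν.Wp_dirac_ne_top hp]
  have hK := ProperSMul.isCompact_setOfPred_inter_nonempty (G := G) (isCompact_singleton (x := x₀))
    (isCompact_closedBall x₀ R.toReal)
  filter_upwards [hK.compl_mem_cocompact] with g hg
  by_contra! hle
  refine hg ⟨g • x₀, smul_mem_smul_set rfl, ?_⟩
  rw [mem_closedBall, dist_edist]
  exact ENNReal.toReal_mono hR
    ((edist_smul_le_Wp_map_smul hp hiso μ ν g x₀).trans (by rw [hR_def]; gcongr))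

lemma exists_Wp_map_smul_eq_DpAct [ProperSMul G X] (hp : 1 ≤ p)
    (hiso : ∀ g : G, Isometry (fun x : X => g • x)) [IsProbabilityMeasure μ]
    [IsProbabilityMeasure ν] (hμ : HasFinitePMoment p μ) (hν : HasFinitePMoment p ν) :
    ∃ g₀ : G, Wp p (μ.map (g₀ • ·)) ν = DpAct G p μ ν := by
  have hW : Wp p (μ.map ((1 : G) • ·)) ν ≠ ⊤ := by
    rw [map_one_smul]; exact hμ.Wp_ne_top hp hν
  obtain ⟨g₀, hg₀⟩ := (continuous_Wp_map_smul hp hiso hμ hν).exists_forall_le' 1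
    ((eventually_cocompact_lt_Wp_map_smul hp hiso hμ hν hW).mono fun _ h => h.le)
  exact ⟨g₀, le_antisymm (le_iInf hg₀) (iInf_le _ g₀)⟩

end Attainment

theorem shape_space_geodesic_general {X : Type*} [MetricSpace X] [CompleteSpace X]
    [TopologicalSpace.SeparableSpace X] [ProperSpace X] [MeasurableSpace X] [BorelSpace X]
    (G : Type*) [Group G] [TopologicalSpace G]
    [MulAction G X] [ContinuousSMul G X]
    (hiso : ∀ g : G, Isometry (fun x : X => g • x))
    (hproper : IsProperMap (fun q : G × X => (q.1 • q.2, q.2)))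
    (p : ℝ) (hp : 1 ≤ p)
    (hgeodesic : ∀ μ ν : Measure X,
      IsProbabilityMeasure μ → HasFinitePMoment p μ →
      IsProbabilityMeasure ν → HasFinitePMoment p ν →
      Wp p μ ν ≠ 0 →
      ∃ γ : ℝ → Measure X, γ 0 = μ ∧ γ 1 = ν ∧
        (∀ t ∈ Icc (0:ℝ) 1, IsProbabilityMeasure (γ t) ∧ HasFinitePMoment p (γ t)) ∧
        ∀ s ∈ Icc (0:ℝ) 1, ∀ t ∈ Icc (0:ℝ) 1,
          Wp p (γ s) (γ t) = ENNReal.ofReal |s - t| * Wp p μ ν) :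
    ∀ μ ν : Measure X,
      IsProbabilityMeasure μ → HasFinitePMoment p μ →
      IsProbabilityMeasure ν → HasFinitePMoment p ν →
      DpAct G p μ ν ≠ 0 →
      ∃ γ : ℝ → Measure X, γ 0 = μ ∧ (∃ g : G, (γ 1).map (fun x : X => g • x) = ν) ∧
        (∀ t ∈ Icc (0:ℝ) 1, IsProbabilityMeasure (γ t) ∧ HasFinitePMoment p (γ t)) ∧
        ∀ s ∈ Icc (0:ℝ) 1, ∀ t ∈ Icc (0:ℝ) 1,
          DpAct G p (γ s) (γ t) = ENNReal.ofReal |s - t| * DpAct G p μ ν := by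
  intro μ ν hμ hμm hν hνm hD
  have : ProperSMul G X := ⟨hproper⟩
  have hp₀ : 0 < p := by positivity
  obtain ⟨g₀, hg₀⟩ := exists_Wp_map_smul_eq_DpAct hp hiso hμm hνm
  rw [Wp_map_smul_left hp₀ hiso] at hg₀
  obtain ⟨γ, hγ₀, hγ₁, hγ, hγW⟩ := hgeodesic μ (ν.map (g₀⁻¹ • ·)) hμ hμm
    (Measure.isProbabilityMeasure_map (measurable_const_smul _).aemeasurable)
    (hνm.map (hiso g₀⁻¹)) (hg₀ ▸ hD)
  refine ⟨γ, hγ₀, ⟨g₀, by rw [hγ₁, map_smul_map_smul, mul_inv_cancel, map_one_smul]⟩, hγ, ?_⟩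
  refine curve_dist_eq_of_le_of_endpoints (DpAct G p) (DpAct_comm hp₀ hiso)
    (DpAct_triangle hp hiso) γ
    (ne_top_of_le_ne_top (hμm.Wp_ne_top hp hνm) (DpAct_le_Wp μ ν))
    (fun s _ t _ => (DpAct_le_Wp _ _).trans_eq (by rw [hγW s ‹_› t ‹_›, hg₀])) ?_
  rw [hγ₀, hγ₁]
  exact DpAct_le_map_smul_right hp₀ hiso μ ν g₀⁻¹

/-- Let `X` be a proper Polish metric space and `G` a topological group acting
continuously, properly and by isometries on `X`. If the `p`-th Wasserstein space over `X`
is geodesic, then the shape space is geodesic: for `μ, ν ∈ P_p(X)` with `D_p(μ,ν) ≠ 0`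
there is a curve `(μ_t)` in `P_p(X)` with `μ_0 = μ`, `μ_1` equivalent to `ν`, and
`D_p(μ_s,μ_t) = |s − t| · D_p(μ,ν)`. -/
theorem shape_space_geodesic {X : Type*} [MetricSpace X] [CompleteSpace X]
    [TopologicalSpace.SeparableSpace X] [ProperSpace X] [MeasurableSpace X] [BorelSpace X]
    (G : Type*) [Group G] [TopologicalSpace G] [IsTopologicalGroup G]
    [MulAction G X] [ContinuousSMul G X]
    (hiso : ∀ g : G, Isometry (fun x : X => g • x))
    (hproper : IsProperMap (fun q : G × X => (q.1 • q.2, q.2)))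
    (p : ℝ) (hp : 1 ≤ p)
    (hgeodesic : ∀ μ ν : Measure X,
      IsProbabilityMeasure μ → HasFinitePMoment p μ →
      IsProbabilityMeasure ν → HasFinitePMoment p ν →
      Wp p μ ν ≠ 0 →
      ∃ γ : ℝ → Measure X, γ 0 = μ ∧ γ 1 = ν ∧
        (∀ t ∈ Icc (0:ℝ) 1, IsProbabilityMeasure (γ t) ∧ HasFinitePMoment p (γ t)) ∧
        ∀ s ∈ Icc (0:ℝ) 1, ∀ t ∈ Icc (0:ℝ) 1,
          Wp p (γ s) (γ t) = ENNReal.ofReal |s - t| * Wp p μ ν) :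
    ∀ μ ν : Measure X,
      IsProbabilityMeasure μ → HasFinitePMoment p μ →
      IsProbabilityMeasure ν → HasFinitePMoment p ν →
      DpAct G p μ ν ≠ 0 →
      ∃ γ : ℝ → Measure X, γ 0 = μ ∧ (∃ g : G, (γ 1).map (fun x : X => g • x) = ν) ∧
        (∀ t ∈ Icc (0:ℝ) 1, IsProbabilityMeasure (γ t) ∧ HasFinitePMoment p (γ t)) ∧
        ∀ s ∈ Icc (0:ℝ) 1, ∀ t ∈ Icc (0:ℝ) 1,
          DpAct G p (γ s) (γ t) = ENNReal.ofReal |s - t| * DpAct G p μ ν :=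
  shape_space_geodesic_general G hiso hproper p hp hgeodesic

end
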